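/- For all real numbers M > 1, α > 1, and β with 0 < β < 1: (1/2)·ln((M − 1)/(M + 1)) + (1/(2√M))·ln((√M + 1)/(√M − 1)) > β² / (6·α·M²). -/

import Mathlib

/-!
With `x = 1 / √M` the Bradley–Terry area becomes
`g x = ((1 + x) log (1 + x) + (1 - x) log (1 - x) - log (1 + x²)) / 2`, with `g 0 = 0` and
`g' x = artanh x - x / (1 + x²)`. The first two terms of the series of `artanh` give
`g' x ≥ 2 x³ / 3`, hence `g x ≥ x⁴ / 6 = 1 / (6 M²)`, which beats `β² / (6 α M²)` as `β² < 1 < α`.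
-/

open Real Set

lemma two_mul_add_le_log_sub_log {x : ℝ} (h0 : 0 ≤ x) (h1 : x < 1) :
    2 * x + 2 / 3 * x ^ 3 ≤ log (1 + x) - log (1 - x) := by
  have hs := hasSum_log_sub_log_of_abs_lt_one (abs_lt.2 ⟨by linarith, h1⟩)
  have := sum_le_hasSum (Finset.range 2) (fun k _ => by positivity) hs
  norm_num [Finset.sum_range_succ] at this
  linarith

/-- The Bradley–Terry area as a function of `x = 1 / √M`. -/
noncomputable def btArea (x : ℝ) : ℝ :=
  (1 + x) / 2 * log (1 + x) + (1 - x) / 2 * log (1 - x) - 1 / 2 * log (1 + x ^ 2)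

lemma hasDerivAt_btArea {x : ℝ} (h0 : -1 < x) (h1 : x < 1) :
    HasDerivAt btArea ((log (1 + x) - log (1 - x)) / 2 - x / (1 + x ^ 2)) x := by
  have hp : HasDerivAt (fun y : ℝ => 1 + y) 1 x := by
    simpa using (hasDerivAt_id x).const_add 1
  have hm : HasDerivAt (fun y : ℝ => 1 - y) (-1) x := by
    simpa using (hasDerivAt_id x).const_sub 1
  have hq : HasDerivAt (fun y : ℝ => 1 + y ^ 2) (2 * x) x := by
    simpa using (hasDerivAt_pow 2 x).const_add 1
  refine ((((hp.div_const 2).mul (hp.log (by linarith))).add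
    ((hm.div_const 2).mul (hm.log (by linarith)))).sub
    ((hq.log (by positivity)).const_mul (1 / 2))).congr_deriv ?_
  field_simp [show 1 + x ≠ 0 by linarith, show 1 - x ≠ 0 by linarith]
  ring

lemma pow_four_div_six_le_btArea {x : ℝ} (h0 : 0 ≤ x) (h1 : x < 1) :
    x ^ 4 / 6 ≤ btArea x := by
  set f' : ℝ → ℝ := fun y => (log (1 + y) - log (1 - y)) / 2 - y / (1 + y ^ 2) - 2 / 3 * y ^ 3
  have hderiv : ∀ y ∈ Ico (0 : ℝ) 1, HasDerivAt (fun y => btArea y - y ^ 4 / 6) (f' y) y := by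
    intro y ⟨hy0, hy1⟩
    refine ((hasDerivAt_btArea (by linarith) hy1).sub
      ((hasDerivAt_pow 4 y).div_const 6)).congr_deriv ?_
    simp only [f']
    ring
  have hmono : MonotoneOn (fun y => btArea y - y ^ 4 / 6) (Ico 0 1) := by
    refine monotoneOn_of_hasDerivWithinAt_nonneg (convex_Ico 0 1)
      (fun y hy => (hderiv y hy).continuousAt.continuousWithinAt)
      (fun y hy => (hderiv y (interior_subset hy)).hasDerivWithinAt) fun y hy => ?_
    rw [interior_Ico] at hy
    -- `artanh y ≥ y + y³ / 3` and `y / (1 + y²) ≤ y - y³ / 2` give `f' y ≥ y³ / 6`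
    have hlog := two_mul_add_le_log_sub_log hy.1.le hy.2
    have hq : 0 < 1 + y ^ 2 := by positivity
    have hfrac : y / (1 + y ^ 2) ≤ y - y ^ 3 / 2 := by
      rw [div_le_iff₀ hq]
      nlinarith [mul_nonneg (pow_pos hy.1 3).le (show 0 ≤ 1 - y ^ 2 by nlinarith [hy.2, hy.1])]
    simp only [f']
    linarith [pow_pos hy.1 3]
  simpa [btArea] using hmono ⟨le_rfl, by norm_num⟩ ⟨h0, h1⟩ h0

lemma btArea_inv_sqrt {M : ℝ} (hM : 1 < M) :
    1 / 2 * log ((M - 1) / (M + 1)) + 1 / (2 * √M) * log ((√M + 1) / (√M - 1)) =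
      btArea (1 / √M) := by
  obtain ⟨s, hs, rfl⟩ : ∃ s, 1 < s ∧ M = s ^ 2 :=
    ⟨√M, lt_sqrt_of_sq_lt (by linarith), (sq_sqrt (by linarith)).symm⟩
  have hs0 : 0 < s := by linarith
  have hsub : 0 < s - 1 := by linarith
  rw [sqrt_sq hs0.le, btArea]
  have hplus : log (1 + 1 / s) = log (s + 1) - log s := by
    rw [← log_div (by linarith) hs0.ne']; congr 1; field_simp
  have hminus : log (1 - 1 / s) = log (s - 1) - log s := by
    rw [← log_div hsub.ne' hs0.ne']; congr 1; field_simp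
  have hsq : log (1 + (1 / s) ^ 2) = log (s ^ 2 + 1) - 2 * log s := by
    rw [show 2 * log s = log (s ^ 2) by simp [log_pow], ← log_div (by positivity) (by positivity)]
    congr 1; field_simp
  have hratio : log ((s ^ 2 - 1) / (s ^ 2 + 1)) = log (s - 1) + log (s + 1) - log (s ^ 2 + 1) := by
    rw [← log_mul hsub.ne' (by linarith), ← log_div (by positivity) (by positivity)]
    congr 1; ring
  rw [hplus, hminus, hsq, hratio, log_div (by linarith) hsub.ne']
  field_simp
  ring

theorem stmt_16 (M α β : ℝ) (hM : 1 < M) (hα : 1 < α) (hβ0 : 0 < β) (hβ1 : β < 1) :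
    1 / 2 * Real.log ((M - 1) / (M + 1)) +
        1 / (2 * Real.sqrt M) * Real.log ((Real.sqrt M + 1) / (Real.sqrt M - 1)) >
      β ^ 2 / (6 * α * M ^ 2) := by
  have hsqrt : 1 < √M := lt_sqrt_of_sq_lt (by linarith)
  have hx : 1 / √M < 1 := (div_lt_one (by linarith)).2 hsqrt
  have hx4 : (1 / √M) ^ 4 / 6 = 1 / (6 * M ^ 2) := by
    rw [div_pow, show √M ^ 4 = (√M ^ 2) ^ 2 by ring, sq_sqrt (by linarith)]
    ring
  have hβα : β ^ 2 < α := by nlinarith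
  rw [gt_iff_lt, btArea_inv_sqrt hM]
  calc β ^ 2 / (6 * α * M ^ 2) < 1 / (6 * M ^ 2) := by
        rw [div_lt_div_iff₀ (by positivity) (by positivity)]
        nlinarith [pow_pos (show 0 < M by linarith) 2]
    _ = (1 / √M) ^ 4 / 6 := hx4.symm
    _ ≤ btArea (1 / √M) := pow_four_div_six_le_btArea (by positivity) hx
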